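/- arXiv:2002.06262 — 4 statements merged into one kernel-verified Lean document; each statement's English description precedes it below -/
import Mathlib

section
/- The dual activation of the normalized ReLU function σ(z)=√2·max(0,z) satisfies σ̂(ρ) = (√(1-ρ²) + (π - arccos(ρ))·ρ)/π for ρ ∈ [-1,1], where σ̂(ρ) = E[σ(X)σ(X̃)] with (X,X̃) jointly Gaussian with mean zero, unit variances, and correlation ρ. -/
/-!
In polar coordinates the standard Gaussian measure on ℝ² is `(2π)⁻¹ r e^{-r²/2} dr dθ`. The
integrand is positively homogeneous of degree two, so the integral factors into the radial moment
`∫₀^∞ r³ e^{-r²/2} dr = 2` and an angular integral. Writing `ρ = cos α` with `α = arccos ρ`, the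
second argument is `r cos (θ - α)`, and `max 0 (cos θ) * max 0 (cos (θ - α))` over a period is
`cos θ cos (θ - α)` on the arc `[α - π/2, π/2]` and zero elsewhere; its integral is
`((π - α) cos α + sin α) / 2`.
-/

open MeasureTheory ProbabilityTheory Real

/-- Normalized ReLU: σ(z) = √2 · max(0,z). -/
noncomputable def nrelu (z : ℝ) : ℝ := Real.sqrt 2 * max 0 z

/-- Product of two standard Gaussians on ℝ², used to represent a correlated
bivariate Gaussian via (X, X̃) = (z₁, ρ z₁ + √(1-ρ²) z₂). -/
noncomputable def stdGauss2 : Measure (ℝ × ℝ) :=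
  (gaussianReal 0 1).prod (gaussianReal 0 1)

open Set

theorem integral_Ioi_pow_three_mul_exp_neg_sq_div_two :
    ∫ r in Ioi (0 : ℝ), r ^ 3 * exp (-r ^ 2 / 2) = 2 := by
  have h := integral_rpow_mul_exp_neg_mul_rpow (p := 2) (q := 3) (b := 1 / 2)
    (by norm_num) (by norm_num) (by norm_num)
  norm_num [Gamma_two] at h
  convert h using 5 with r
  ring

theorem gaussianPDFReal_zero_one_mul_gaussianPDFReal (x y : ℝ) :
    gaussianPDFReal 0 1 x * gaussianPDFReal 0 1 y = (2 * π)⁻¹ * exp (-(x ^ 2 + y ^ 2) / 2) := by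
  simp only [gaussianPDFReal, NNReal.coe_one, mul_one, sub_zero]
  rw [mul_mul_mul_comm, ← mul_inv, mul_self_sqrt (by positivity), ← exp_add]
  ring_nf

theorem integral_stdGauss2_eq_integral_smul {E : Type*} [NormedAddCommGroup E] [NormedSpace ℝ E]
    (f : ℝ × ℝ → E) :
    ∫ z, f z ∂stdGauss2 = ∫ z, ((2 * π)⁻¹ * exp (-(z.1 ^ 2 + z.2 ^ 2) / 2)) • f z := by
  rw [stdGauss2, gaussianReal_of_var_ne_zero 0 one_ne_zero,
    prod_withDensity (measurable_gaussianPDF 0 1) (measurable_gaussianPDF 0 1),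
    ← Measure.volume_eq_prod, integral_withDensity_eq_integral_toReal_smul (by fun_prop)
      (ae_of_all _ fun _ => ENNReal.mul_lt_top gaussianPDF_lt_top gaussianPDF_lt_top)]
  simp only [ENNReal.toReal_mul, toReal_gaussianPDF, gaussianPDFReal_zero_one_mul_gaussianPDFReal]

theorem integral_cos_mul_cos_sub (α a b : ℝ) :
    ∫ θ in a..b, cos θ * cos (θ - α) =
      ((b - a) * cos α + (sin (2 * b - α) - sin (2 * a - α)) / 2) / 2 := by
  have h : ∀ θ, cos θ * cos (θ - α) = (cos α + cos (2 * θ - α)) / 2 := by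
    intro θ
    rw [cos_sub, cos_sub (2 * θ), cos_two_mul, sin_two_mul]
    ring
  simp_rw [h]
  rw [intervalIntegral.integral_div, intervalIntegral.integral_add, intervalIntegral.integral_const,
    intervalIntegral.integral_comp_mul_sub (fun x => cos x) two_ne_zero, integral_cos]
  · simp only [smul_eq_mul]
    ring
  · exact intervalIntegrable_const
  · exact (continuous_cos.comp (by fun_prop)).intervalIntegrable _ _

theorem integral_stdGauss2_of_polar_eq_sq_mul {f : ℝ × ℝ → ℝ} {g : ℝ → ℝ}
    (hfg : ∀ r > 0, ∀ θ, f (r * cos θ, r * sin θ) = r ^ 2 * g θ) :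
    ∫ z, f z ∂stdGauss2 = (∫ θ in -π..π, g θ) / π := by
  have hpolar : ∀ p ∈ polarCoord.target,
      p.1 • ((2 * π)⁻¹ * exp (-((polarCoord.symm p).1 ^ 2 + (polarCoord.symm p).2 ^ 2) / 2)) •
        f (polarCoord.symm p) = (p.1 ^ 3 * exp (-p.1 ^ 2 / 2)) * (g p.2 / (2 * π)) := by
    rintro ⟨r, θ⟩ ⟨hr, -⟩
    have hsq : (r * cos θ) ^ 2 + (r * sin θ) ^ 2 = r ^ 2 := by
      linear_combination r ^ 2 * cos_sq_add_sin_sq θ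
    simp only [polarCoord_symm_apply, smul_eq_mul, hsq, hfg r hr θ]
    ring
  rw [integral_stdGauss2_eq_integral_smul, ← integral_comp_polarCoord_symm,
    setIntegral_congr_fun polarCoord.open_target.measurableSet hpolar, polarCoord_target,
    Measure.volume_eq_prod, ← Measure.prod_restrict,
    integral_prod_mul (fun r => r ^ 3 * exp (-r ^ 2 / 2)) (fun θ => g θ / (2 * π)), integral_div,
    integral_Ioi_pow_three_mul_exp_neg_sq_div_two, ← integral_Ioc_eq_integral_Ioo,
    ← intervalIntegral.integral_of_le (by linarith [pi_pos])]
  field_simp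

theorem integral_posPart_cos_mul_posPart_cos_sub {α : ℝ} (hα₀ : 0 ≤ α) (hαπ : α ≤ π) :
    ∫ θ in -π..π, max 0 (cos θ) * max 0 (cos (θ - α)) = ((π - α) * cos α + sin α) / 2 := by
  set g := fun θ => max 0 (cos θ) * max 0 (cos (θ - α))
  have hg : ∀ a b, IntervalIntegrable g volume a b := fun a b =>
    Continuous.intervalIntegrable (by fun_prop) a b
  have hπ := pi_pos
  have hleft : EqOn g 0 (uIcc (-π) (α - π / 2)) := by
    intro θ hθ
    rw [uIcc_of_le (by linarith)] at hθ
    rcases le_or_gt θ (-(π / 2)) with h | h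
    · have hc : cos θ ≤ 0 := by
        rw [← cos_neg]
        exact cos_nonpos_of_pi_div_two_le_of_le (by linarith) (by linarith [hθ.1])
      simp [g, max_eq_left hc]
    · have hc : cos (θ - α) ≤ 0 := by
        rw [← cos_neg, neg_sub]
        exact cos_nonpos_of_pi_div_two_le_of_le (by linarith [hθ.2]) (by linarith)
      simp [g, max_eq_left hc]
  have hmid : EqOn g (fun θ => cos θ * cos (θ - α)) (uIcc (α - π / 2) (π / 2)) := by
    intro θ hθ
    rw [uIcc_of_le (by linarith)] at hθ
    have h₁ : 0 ≤ cos θ := cos_nonneg_of_mem_Icc ⟨by linarith [hθ.1], hθ.2⟩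
    have h₂ : 0 ≤ cos (θ - α) := cos_nonneg_of_mem_Icc ⟨by linarith [hθ.1], by linarith [hθ.2]⟩
    simp [g, max_eq_right h₁, max_eq_right h₂]
  have hright : EqOn g 0 (uIcc (π / 2) π) := by
    intro θ hθ
    rw [uIcc_of_le (by linarith)] at hθ
    have hc : cos θ ≤ 0 := cos_nonpos_of_pi_div_two_le_of_le hθ.1 (by linarith [hθ.2])
    simp [g, max_eq_left hc]
  calc ∫ θ in -π..π, g θ
      = (∫ θ in -π..(α - π / 2), g θ) + (∫ θ in (α - π / 2)..(π / 2), g θ)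
          + ∫ θ in (π / 2)..π, g θ := by
        rw [intervalIntegral.integral_add_adjacent_intervals (hg _ _) (hg _ _),
          intervalIntegral.integral_add_adjacent_intervals (hg _ _) (hg _ _)]
    _ = ∫ θ in (α - π / 2)..(π / 2), cos θ * cos (θ - α) := by
        rw [intervalIntegral.integral_congr hleft, intervalIntegral.integral_congr hmid,
          intervalIntegral.integral_congr hright]
        simp
    _ = ((π - α) * cos α + sin α) / 2 := by
        rw [integral_cos_mul_cos_sub, show 2 * (π / 2) - α = π - α by ring,
          show 2 * (α - π / 2) - α = α - π by ring, sin_pi_sub, sin_sub_pi]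
        ring

theorem nrelu_mul_of_nonneg {r : ℝ} (hr : 0 ≤ r) (x : ℝ) : nrelu (r * x) = r * nrelu x := by
  rw [nrelu, nrelu, ← mul_zero r, ← mul_max_of_nonneg _ _ hr, mul_zero]
  ring

theorem nrelu_mul_nrelu (x y : ℝ) : nrelu x * nrelu y = 2 * (max 0 x * max 0 y) := by
  rw [nrelu, nrelu, mul_mul_mul_comm, mul_self_sqrt zero_le_two]

theorem cos_sub_arccos {ρ : ℝ} (h₁ : -1 ≤ ρ) (h₂ : ρ ≤ 1) (θ : ℝ) :
    cos (θ - arccos ρ) = ρ * cos θ + √(1 - ρ ^ 2) * sin θ := by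
  rw [cos_sub, cos_arccos h₁ h₂, sin_arccos]
  ring

/-- The dual activation of the normalized ReLU:
E[σ(X)σ(X̃)] = (√(1-ρ²) + (π - arccos ρ)·ρ)/π for correlation ρ ∈ [-1,1]. -/
theorem dual_activation_nrelu (ρ : ℝ) (hρ : ρ ∈ Set.Icc (-1 : ℝ) 1) :
    ∫ p : ℝ × ℝ, nrelu p.1 * nrelu (ρ * p.1 + Real.sqrt (1 - ρ ^ 2) * p.2) ∂stdGauss2
      = (Real.sqrt (1 - ρ ^ 2) + (π - Real.arccos ρ) * ρ) / π := by
  have hpolar : ∀ r > 0, ∀ θ,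
      nrelu (r * cos θ) * nrelu (ρ * (r * cos θ) + √(1 - ρ ^ 2) * (r * sin θ)) =
        r ^ 2 * (2 * (max 0 (cos θ) * max 0 (cos (θ - arccos ρ)))) := by
    intro r hr θ
    rw [cos_sub_arccos hρ.1 hρ.2, ← nrelu_mul_nrelu, nrelu_mul_of_nonneg hr.le,
      show ρ * (r * cos θ) + √(1 - ρ ^ 2) * (r * sin θ)
        = r * (ρ * cos θ + √(1 - ρ ^ 2) * sin θ) by ring, nrelu_mul_of_nonneg hr.le]
    ring
  rw [integral_stdGauss2_of_polar_eq_sq_mul hpolar, intervalIntegral.integral_const_mul,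
    integral_posPart_cos_mul_posPart_cos_sub (arccos_nonneg ρ) (arccos_le_pi ρ),
    cos_arccos hρ.1 hρ.2, sin_arccos]
  ring
end

section
/- For all ρ ∈ [-1,1], the function σ̂(ρ) = (√(1-ρ²) + (π - arccos ρ)·ρ)/π satisfies σ̂(ρ) ≥ ρ, with equality if and only if ρ = 1. -/
/-!
With θ = arccos ρ ∈ [0, π] we have σ̂(ρ) - ρ = (sin θ - θ cos θ) / π. For θ ∈ (0, π] this is
positive: trivially when cos θ ≤ 0, and by θ < tan θ when cos θ > 0. It vanishes at θ = 0,
i.e. at ρ = 1.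
-/

open Real

/-- Dual activation of the normalized ReLU. -/
noncomputable def hatSigma (ρ : ℝ) : ℝ :=
  (Real.sqrt (1 - ρ ^ 2) + (π - Real.arccos ρ) * ρ) / π

theorem Real.mul_cos_lt_sin {x : ℝ} (h0 : 0 < x) (hx : x < π / 2) : x * cos x < sin x := by
  have hcos : 0 < cos x := cos_pos_of_mem_Ioo ⟨by linarith, hx⟩
  rw [← lt_div_iff₀ hcos, ← tan_eq_sin_div_cos]
  exact lt_tan h0 hx

theorem Real.arccos_mul_lt_sqrt_one_sub_sq {ρ : ℝ} (h1 : -1 ≤ ρ) (h2 : ρ < 1) :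
    arccos ρ * ρ < √(1 - ρ ^ 2) := by
  rcases lt_trichotomy ρ 0 with hneg | rfl | hpos
  · exact (mul_neg_of_pos_of_neg (arccos_pos.2 h2) hneg).trans_le (sqrt_nonneg _)
  · simp
  · have h := mul_cos_lt_sin (arccos_pos.2 h2) (arccos_lt_pi_div_two.2 hpos)
    rwa [cos_arccos h1 h2.le, sin_arccos] at h

theorem hatSigma_sub_self (ρ : ℝ) : hatSigma ρ - ρ = (√(1 - ρ ^ 2) - arccos ρ * ρ) / π := by
  rw [hatSigma, eq_div_iff pi_ne_zero, sub_mul, div_mul_cancel₀ _ pi_ne_zero]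
  ring

theorem lt_hatSigma {ρ : ℝ} (h1 : -1 ≤ ρ) (h2 : ρ < 1) : ρ < hatSigma ρ := by
  rw [← sub_pos, hatSigma_sub_self]
  exact div_pos (sub_pos.2 (arccos_mul_lt_sqrt_one_sub_sq h1 h2)) pi_pos

theorem hatSigma_one : hatSigma 1 = 1 := by
  simp [hatSigma, pi_ne_zero]

/-- σ̂(ρ) ≥ ρ on [-1,1], with equality iff ρ = 1. -/
theorem hatSigma_ge (ρ : ℝ) (hρ : ρ ∈ Set.Icc (-1 : ℝ) 1) :
    ρ ≤ hatSigma ρ ∧ (hatSigma ρ = ρ ↔ ρ = 1) := by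
  obtain ⟨h1, h2⟩ := hρ
  rcases h2.eq_or_lt with rfl | h2
  · simp [hatSigma_one]
  · have hlt := lt_hatSigma h1 h2
    exact ⟨hlt.le, iff_of_false hlt.ne' h2.ne⟩
end

section
/- Let e ∈ (0,1) and let e' = e - (σ̂(1-e) - (1-e)) where σ̂(ρ) = (√(1-ρ²) + (π - arccos ρ)·ρ)/π; equivalently 1 - e' = σ̂(1-e). Then e - e^{3/2}/π ≤ e' ≤ e - (2√2/(3π))·e^{3/2}. -/
open Real

open Set

/-! Writing `1 - e = cos 2s` with `s ∈ (0, π/4)`, we get `e = 2 sin² s`, `e^{3/2} = 2√2 sin³ s` and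
`e' = e - (sin 2s - 2s cos 2s) / π`, so the claim becomes
`(8/3) sin³ s ≤ sin 2s - 2s cos 2s ≤ 2√2 sin³ s`. The middle term has derivative `8 s sin s cos s`.
The lower bound then follows from `sin s ≤ s`. For the upper bound the difference vanishes at `0`
and at `π/4`, and its derivative `2 sin s cos s (3√2 sin s - 4s)` changes sign only once on the way,
because `sin s / s` is decreasing. -/

lemma hatSigma_cos {θ : ℝ} (h₀ : 0 ≤ θ) (hπ : θ ≤ π) :
    hatSigma (cos θ) = cos θ + (sin θ - θ * cos θ) / π := by
  have hsin : √(1 - cos θ ^ 2) = sin θ := by rw [← sin_arccos, arccos_cos h₀ hπ]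
  rw [hatSigma, hsin, arccos_cos h₀ hπ]
  field_simp
  ring

lemma rpow_three_halves_two_mul_sq {x : ℝ} (hx : 0 ≤ x) :
    (2 * x ^ 2) ^ ((3 : ℝ) / 2) = 2 * √2 * x ^ 3 := by
  have hsqrt : √(2 * x ^ 2) = √2 * x := by rw [sqrt_mul zero_le_two, sqrt_sq hx]
  rw [show (3 : ℝ) / 2 = (1 / 2 : ℝ) * (3 : ℕ) by norm_num, rpow_mul (by positivity),
    rpow_natCast, ← sqrt_eq_rpow, hsqrt, mul_pow, pow_succ, sq_sqrt zero_le_two]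

lemma mul_sin_le_mul_sin {a b : ℝ} (ha : 0 ≤ a) (hab : a ≤ b) (hb : b ≤ π) :
    a * sin b ≤ b * sin a := by
  obtain rfl | hb₀ := (ha.trans hab).eq_or_lt
  · simp [le_antisymm hab ha]
  have h := strictConcaveOn_sin_Icc.concaveOn.2 ⟨le_rfl, pi_pos.le⟩ ⟨hb₀.le, hb⟩
    (sub_nonneg.2 (div_le_one_of_le₀ hab hb₀.le)) (div_nonneg ha hb₀.le) (by ring)
  simp only [smul_eq_mul, mul_zero, zero_add, sin_zero, div_mul_cancel₀ a hb₀.ne'] at h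
  calc a * sin b = b * (a / b * sin b) := by field_simp
    _ ≤ b * sin a := by gcongr

lemma le_of_hasDerivAt_nonneg {f f' : ℝ → ℝ} {a b : ℝ} (hf : ∀ t, HasDerivAt f (f' t) t)
    (hab : a ≤ b) (hf' : ∀ t ∈ Ioo a b, 0 ≤ f' t) : f a ≤ f b :=
  monotoneOn_of_hasDerivWithinAt_nonneg (convex_Icc a b)
    (fun t _ ↦ (hf t).continuousAt.continuousWithinAt) (fun t _ ↦ (hf t).hasDerivWithinAt)
    (by simpa only [interior_Icc] using hf') (left_mem_Icc.2 hab) (right_mem_Icc.2 hab) hab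

lemma le_of_hasDerivAt_nonpos {f f' : ℝ → ℝ} {a b : ℝ} (hf : ∀ t, HasDerivAt f (f' t) t)
    (hab : a ≤ b) (hf' : ∀ t ∈ Ioo a b, f' t ≤ 0) : f b ≤ f a :=
  antitoneOn_of_hasDerivWithinAt_nonpos (convex_Icc a b)
    (fun t _ ↦ (hf t).continuousAt.continuousWithinAt) (fun t _ ↦ (hf t).hasDerivWithinAt)
    (by simpa only [interior_Icc] using hf') (left_mem_Icc.2 hab) (right_mem_Icc.2 hab) hab

lemma hasDerivAt_sin_two_mul_sub (t : ℝ) :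
    HasDerivAt (fun t ↦ sin (2 * t) - 2 * t * cos (2 * t)) (8 * t * sin t * cos t) t := by
  have h2 : HasDerivAt (fun t : ℝ ↦ 2 * t) 2 t := by simpa using (hasDerivAt_id t).const_mul 2
  refine (h2.sin.sub (h2.mul h2.cos)).congr_deriv ?_
  rw [sin_two_mul]
  ring

lemma hasDerivAt_sin_pow_three (c t : ℝ) :
    HasDerivAt (fun t ↦ c * sin t ^ 3) (3 * c * sin t ^ 2 * cos t) t := by
  refine (((hasDerivAt_sin t).pow 3).const_mul c).congr_deriv ?_
  push_cast
  ring

lemma eight_div_three_mul_sin_pow_three_le {s : ℝ} (h₀ : 0 ≤ s) (hs : s ≤ π / 2) :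
    8 / 3 * sin s ^ 3 ≤ sin (2 * s) - 2 * s * cos (2 * s) := by
  have hf : ∀ t, HasDerivAt (fun t ↦ sin (2 * t) - 2 * t * cos (2 * t) - 8 / 3 * sin t ^ 3)
      (8 * sin t * cos t * (t - sin t)) t := fun t ↦
    ((hasDerivAt_sin_two_mul_sub t).sub (hasDerivAt_sin_pow_three _ t)).congr_deriv (by ring)
  have := le_of_hasDerivAt_nonneg hf h₀ fun t ⟨ht₀, hts⟩ ↦ by
    have : 0 ≤ sin t := sin_nonneg_of_nonneg_of_le_pi ht₀.le (by linarith [pi_pos])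
    have : 0 ≤ cos t := cos_nonneg_of_mem_Icc ⟨by linarith [pi_pos], by linarith⟩
    have : 0 ≤ t - sin t := sub_nonneg.2 (sin_le ht₀.le)
    positivity
  simpa using this

lemma sin_two_mul_sub_le_two_mul_sqrt_two_mul_sin_pow_three {s : ℝ} (h₀ : 0 ≤ s)
    (hs : s ≤ π / 4) : sin (2 * s) - 2 * s * cos (2 * s) ≤ 2 * √2 * sin s ^ 3 := by
  set f := fun t ↦ 2 * √2 * sin t ^ 3 - (sin (2 * t) - 2 * t * cos (2 * t))
  have hf : ∀ t, HasDerivAt f (2 * sin t * cos t * (3 * √2 * sin t - 4 * t)) t := fun t ↦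
    ((hasDerivAt_sin_pow_three _ t).sub (hasDerivAt_sin_two_mul_sub t)).congr_deriv (by ring)
  have hf₀ : f 0 = 0 := by simp [f]
  have hfπ : f (π / 4) = 0 := by
    simp only [f, show 2 * (π / 4) = π / 2 by ring, sin_pi_div_two, cos_pi_div_two,
      sin_pi_div_four]
    nlinarith [sq_sqrt (zero_le_two (α := ℝ))]
  have hsincos : ∀ t ∈ Ioo 0 (π / 4), 0 ≤ 2 * sin t * cos t := fun t ⟨ht₀, htπ⟩ ↦ by
    have : 0 ≤ sin t := sin_nonneg_of_nonneg_of_le_pi ht₀.le (by linarith [pi_pos])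
    have : 0 ≤ cos t := cos_nonneg_of_mem_Icc ⟨by linarith [pi_pos], by linarith⟩
    positivity
  suffices 0 ≤ f s by simpa [f] using this
  rcases le_or_gt (4 * s) (3 * √2 * sin s) with hφ | hφ
  · rw [← hf₀]
    refine le_of_hasDerivAt_nonneg hf h₀ fun t ⟨ht₀, hts⟩ ↦
      mul_nonneg (hsincos t ⟨ht₀, hts.trans_le hs⟩) ?_
    have := mul_sin_le_mul_sin ht₀.le hts.le (by linarith [pi_pos])
    have : 0 ≤ s * (3 * √2 * sin t - 4 * t) := by
      nlinarith [mul_le_mul_of_nonneg_left this (by positivity : (0 : ℝ) ≤ 3 * √2),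
        mul_nonneg ht₀.le (sub_nonneg.2 hφ)]
    exact (mul_nonneg_iff_of_pos_left (ht₀.trans hts)).1 this
  · have hs₀ : 0 < s := h₀.lt_of_ne (by rintro rfl; simp at hφ)
    rw [← hfπ]
    refine le_of_hasDerivAt_nonpos hf hs fun t ⟨hst, htπ⟩ ↦
      mul_nonpos_of_nonneg_of_nonpos (hsincos t ⟨hs₀.trans hst, htπ⟩) ?_
    have := mul_sin_le_mul_sin h₀ hst.le (by linarith [pi_pos])
    have : s * (3 * √2 * sin t - 4 * t) ≤ 0 := by
      nlinarith [mul_le_mul_of_nonneg_left this (by positivity : (0 : ℝ) ≤ 3 * √2),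
        mul_nonneg (hs₀.trans hst).le (sub_nonneg.2 hφ.le)]
    exact nonpos_of_mul_nonpos_right this hs₀

/-- With e ∈ (0,1) and e' = 1 - σ̂(1-e), we have
e - e^{3/2}/π ≤ e' ≤ e - (2√2/(3π))·e^{3/2}. -/
theorem error_recursion_bounds (e : ℝ) (he : e ∈ Set.Ioo (0 : ℝ) 1) :
    e - e ^ ((3 : ℝ) / 2) / π ≤ 1 - hatSigma (1 - e) ∧
    1 - hatSigma (1 - e) ≤ e - (2 * Real.sqrt 2 / (3 * π)) * e ^ ((3 : ℝ) / 2) := by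
  obtain ⟨he₀, he₁⟩ := he
  set s := arccos (1 - e) / 2
  have hs₀ : 0 ≤ s := div_nonneg (arccos_nonneg _) zero_le_two
  have hs : s ≤ π / 4 := by
    have := arccos_le_pi_div_two.2 (by linarith : 0 ≤ 1 - e)
    show arccos (1 - e) / 2 ≤ π / 4
    linarith
  have hcos : cos (2 * s) = 1 - e := by
    rw [mul_div_cancel₀ _ two_ne_zero, cos_arccos (by linarith) (by linarith)]
  have he_eq : e = 2 * sin s ^ 2 := by
    linear_combination hcos - cos_two_mul' s - sin_sq_add_cos_sq s
  have hpow : e ^ ((3 : ℝ) / 2) = 2 * √2 * sin s ^ 3 := by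
    rw [he_eq, rpow_three_halves_two_mul_sq
      (sin_nonneg_of_nonneg_of_le_pi hs₀ (by linarith [pi_pos]))]
  have hσ : 1 - hatSigma (1 - e) = e - (sin (2 * s) - 2 * s * cos (2 * s)) / π := by
    rw [← hcos, hatSigma_cos (by positivity) (by linarith [pi_pos]), hcos]
    ring
  have hconst : 2 * √2 / (3 * π) * (2 * √2 * sin s ^ 3) = 8 / 3 * sin s ^ 3 / π := by
    field_simp
    rw [sq_sqrt zero_le_two]
    ring
  rw [hσ, hpow, hconst]
  constructor
  · gcongr
    exact sin_two_mul_sub_le_two_mul_sqrt_two_mul_sin_pow_three hs₀ hs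
  · gcongr
    exact eight_div_three_mul_sin_pow_three_le hs₀ (by linarith)
end

section
/- The ℓ₁-norm of the gradient of ψ_σ at a 2×2 positive definite matrix with entries a, b, c (a = top-left, c = bottom-right, b = off-diagonal) equals (1/2)·((a+c)/√(ac))·|σ̂(b/√(ac)) − (b/√(ac))·σ̂'(b/√(ac))| + σ̂'(b/√(ac)), and consequently ψ_σ is (1 + (1/π)(r/μ)²)-Lipschitz with respect to the entrywise max norm on the set of 2×2 positive definite matrices whose diagonal entries lie in [μ−r, μ+r], for any μ > 0 and 0 < r ≤ μ/2. -/
open Real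

/-- Derivative of the dual activation. -/
noncomputable def hatSigma' (ρ : ℝ) : ℝ := (π - Real.arccos ρ) / π

/-- The ReLU dual kernel ψ_σ as a function of the entries (a,b,c) of the 2×2
covariance matrix ((a,b),(b,c)): ψ_σ = √(ac)·σ̂(b/√(ac)). -/
noncomputable def psiSigma (a b c : ℝ) : ℝ :=
  Real.sqrt (a * c) * hatSigma (b / Real.sqrt (a * c))

/-! With `ρ = b / √(ac)` the chain rule gives `∂ₐψ = c / (2√(ac)) · (σ̂(ρ) - ρ σ̂'(ρ))`,
symmetrically for `∂_c ψ`, and `∂_b ψ = σ̂'(ρ)`, where `σ̂(ρ) - ρ σ̂'(ρ) = √(1 - ρ²) / π ≥ 0`.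

For the Lipschitz bound, the segment between two points of `M_{μ,r}` stays in `M_{μ,r}`
(the cross term `ac' + a'c - 2bb'` is positive), so by the mean value theorem it suffices to bound
the `ℓ₁`-norm of the gradient on `M_{μ,r}`. With `θ = arccos ρ` and `κ = (a + c) / (2√(ac))` this
norm is `κ sin θ / π + (π - θ) / π ≤ 1 + (κ - 1) / π`, because `sin θ ≤ θ` and `sin θ ≤ 1`; finally
`κ ≤ μ / √(μ² - r²) ≤ 1 + (r / μ)²` as long as `r ≤ μ / 2`. -/

lemma hatSigma'_nonneg (ρ : ℝ) : 0 ≤ hatSigma' ρ :=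
  div_nonneg (sub_nonneg.2 (arccos_le_pi ρ)) pi_pos.le

lemma hatSigma_sub_mul_hatSigma' (ρ : ℝ) :
    hatSigma ρ - ρ * hatSigma' ρ = √(1 - ρ ^ 2) / π := by
  unfold hatSigma hatSigma'
  ring

lemma hasDerivAt_hatSigma {ρ : ℝ} (h : ρ ^ 2 < 1) : HasDerivAt hatSigma (hatSigma' ρ) ρ := by
  have hpos : 0 < 1 - ρ ^ 2 := by linarith
  have hρ : -1 < ρ ∧ ρ < 1 := abs_lt.1 (abs_lt_of_sq_lt_sq (by simpa using h) zero_le_one)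
  have hsqrt := (hasDerivAt_sqrt hpos.ne').comp ρ ((hasDerivAt_pow 2 ρ).const_sub 1)
  have harccos := ((hasDerivAt_arccos hρ.1.ne' hρ.2.ne).const_sub π).mul (hasDerivAt_id ρ)
  refine ((hsqrt.add harccos).div_const π).congr_deriv ?_
  have hsqrt_ne : √(1 - ρ ^ 2) ≠ 0 := (sqrt_pos.2 hpos).ne'
  simp only [hatSigma', id]
  field_simp
  ring

lemma sqrt_one_sub_sq_le_arccos (ρ : ℝ) : √(1 - ρ ^ 2) ≤ arccos ρ :=
  sin_arccos ρ ▸ sin_le (arccos_nonneg ρ)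

lemma mul_abs_hatSigma_sub_add_le {ρ K k : ℝ} (hK : K ≤ 1 + k ^ 2) :
    K * |hatSigma ρ - ρ * hatSigma' ρ| + hatSigma' ρ ≤ 1 + (1 / π) * k ^ 2 := by
  rw [hatSigma_sub_mul_hatSigma', abs_of_nonneg (by positivity)]
  have hle_arccos : √(1 - ρ ^ 2) / π ≤ 1 - hatSigma' ρ := by
    rw [hatSigma', one_sub_div pi_pos.ne', sub_sub_cancel]
    gcongr
    exact sqrt_one_sub_sq_le_arccos ρ
  have hle_one : √(1 - ρ ^ 2) / π ≤ 1 / π := by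
    gcongr
    exact sqrt_le_one.2 (by nlinarith)
  calc K * (√(1 - ρ ^ 2) / π) + hatSigma' ρ
      ≤ (1 + k ^ 2) * (√(1 - ρ ^ 2) / π) + hatSigma' ρ := by gcongr
    _ ≤ 1 + (1 / π) * k ^ 2 := by nlinarith [sq_nonneg k]

lemma HasDerivAt.psiSigma {A B C : ℝ → ℝ} {A' B' C' t : ℝ}
    (hA : HasDerivAt A A' t) (hB : HasDerivAt B B' t) (hC : HasDerivAt C C' t)
    (ha : 0 < A t) (hc : 0 < C t) (hb : B t ^ 2 < A t * C t) :
    HasDerivAt (fun u => psiSigma (A u) (B u) (C u))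
      ((A' * C t + A t * C') / (2 * √(A t * C t)) *
          (hatSigma (B t / √(A t * C t)) -
            B t / √(A t * C t) * hatSigma' (B t / √(A t * C t))) +
        B' * hatSigma' (B t / √(A t * C t))) t := by
  have hac : 0 < A t * C t := mul_pos ha hc
  have hs : √(A t * C t) ≠ 0 := (sqrt_pos.2 hac).ne'
  have hρ : (B t / √(A t * C t)) ^ 2 < 1 := by
    rwa [div_pow, sq_sqrt hac.le, div_lt_one hac]
  have hsqrt := (hA.mul hC).sqrt hac.ne'
  have hratio := (hasDerivAt_hatSigma hρ).comp t (hB.div hsqrt hs)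
  refine (hsqrt.mul hratio).congr_deriv ?_
  simp only [Function.comp_apply, Pi.mul_apply, Pi.div_apply]
  field_simp
  ring

lemma two_mul_mul_lt_of_sq_lt_mul {a b c a' b' c' : ℝ} (ha : 0 < a) (hc' : 0 < c')
    (hb : b ^ 2 < a * c) (hb' : b' ^ 2 < a' * c') : 2 * b * b' < a * c' + a' * c := by
  have hprod : b ^ 2 * b' ^ 2 < (a * c) * (a' * c') :=
    mul_lt_mul'' hb hb' (sq_nonneg b) (sq_nonneg b')
  refine (le_abs_self _).trans_lt (abs_lt_of_sq_lt_sq ?_ ?_)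
  · nlinarith [sq_nonneg (a * c' - a' * c)]
  · nlinarith [sq_nonneg b, mul_pos ha hc']

lemma sq_lt_mul_of_segment {a b c a' b' c' t : ℝ} (ha : 0 < a) (hc' : 0 < c')
    (hb : b ^ 2 < a * c) (hb' : b' ^ 2 < a' * c') (ht : t ∈ Set.Icc (0 : ℝ) 1) :
    (b + t * (b' - b)) ^ 2 < (a + t * (a' - a)) * (c + t * (c' - c)) := by
  have hexpand : (a + t * (a' - a)) * (c + t * (c' - c)) - (b + t * (b' - b)) ^ 2 =
      (1 - t) ^ 2 * (a * c - b ^ 2) + t ^ 2 * (a' * c' - b' ^ 2) +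
        t * (1 - t) * (a * c' + a' * c - 2 * b * b') := by ring
  have hcross : 0 ≤ t * (1 - t) * (a * c' + a' * c - 2 * b * b') :=
    mul_nonneg (mul_nonneg ht.1 (sub_nonneg.2 ht.2))
      (sub_nonneg.2 (two_mul_mul_lt_of_sq_lt_mul ha hc' hb hb').le)
  rw [← sub_pos, hexpand]
  rcases ht.2.lt_or_eq with ht1 | rfl
  · have h1 : 0 < (1 - t) ^ 2 * (a * c - b ^ 2) := by
      have := sub_pos.2 ht1
      have := sub_pos.2 hb
      positivity
    have h2 : 0 ≤ t ^ 2 * (a' * c' - b' ^ 2) := mul_nonneg (sq_nonneg t) (sub_pos.2 hb').le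
    linarith
  · simpa using sub_pos.2 hb'

lemma sq_add_mul_one_sub_sq_div_le {μ r a c : ℝ} (hμ : 0 < μ) (hr : r ≤ μ)
    (ha : a ∈ Set.Icc (μ - r) (μ + r)) (hc : c ∈ Set.Icc (μ - r) (μ + r)) :
    (a + c) ^ 2 * (1 - (r / μ) ^ 2) ≤ 4 * (a * c) := by
  have hr0 : 0 ≤ r := by linarith [ha.1.trans ha.2]
  have hsub : 0 ≤ μ - r := sub_nonneg.2 hr
  have hadd : 0 ≤ μ + r := by linarith
  have hac : μ * (a - c) ≤ r * (a + c) := by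
    nlinarith [mul_le_mul_of_nonneg_left ha.2 hsub, mul_le_mul_of_nonneg_left hc.1 hadd]
  have hca : μ * (c - a) ≤ r * (a + c) := by
    nlinarith [mul_le_mul_of_nonneg_left hc.2 hsub, mul_le_mul_of_nonneg_left ha.1 hadd]
  have hsq : (μ * (a - c)) ^ 2 ≤ (r * (a + c)) ^ 2 := sq_le_sq' (by linarith) hac
  rw [div_pow, one_sub_div (by positivity), mul_div_assoc', div_le_iff₀ (by positivity)]
  nlinarith

lemma add_div_two_sqrt_mul_le {μ r a c : ℝ} (hμ : 0 < μ) (hr : r ≤ μ / 2)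
    (ha : a ∈ Set.Icc (μ - r) (μ + r)) (hc : c ∈ Set.Icc (μ - r) (μ + r)) :
    (a + c) / (2 * √(a * c)) ≤ 1 + (r / μ) ^ 2 := by
  set x := (r / μ) ^ 2 with hx
  have ha0 : 0 < a := by linarith [ha.1]
  have hc0 : 0 < c := by linarith [hc.1]
  have hx0 : 0 ≤ x := sq_nonneg _
  have hx4 : x ≤ 1 / 4 := by
    rw [hx, div_pow, div_le_iff₀ (by positivity)]
    nlinarith [ha.1.trans ha.2]
  have hfactor : 1 ≤ (1 - x) * (1 + x) ^ 2 := by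
    nlinarith [mul_nonneg hx0 (by nlinarith : 0 ≤ 1 - x - x ^ 2)]
  have hsq : (a + c) ^ 2 ≤ (2 * √(a * c) * (1 + x)) ^ 2 :=
    calc (a + c) ^ 2 ≤ (a + c) ^ 2 * (1 - x) * (1 + x) ^ 2 := by
          rw [mul_assoc]; exact le_mul_of_one_le_right (sq_nonneg _) hfactor
      _ ≤ 4 * (a * c) * (1 + x) ^ 2 :=
          mul_le_mul_of_nonneg_right
            (sq_add_mul_one_sub_sq_div_le hμ (by linarith) ha hc) (sq_nonneg _)
      _ = (2 * √(a * c) * (1 + x)) ^ 2 := by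
          rw [mul_pow, mul_pow, sq_sqrt (by positivity)]; ring
  rw [div_le_iff₀ (by positivity), mul_comm (1 + x)]
  exact (pow_le_pow_iff_left₀ (by positivity) (by positivity) two_ne_zero).1 hsq

theorem abs_deriv_psiSigma_add_eq {a b c : ℝ} (ha : 0 < a) (hc : 0 < c) (hb : b ^ 2 < a * c) :
    |deriv (fun t => psiSigma t b c) a| + |deriv (fun t => psiSigma a t c) b| +
        |deriv (fun t => psiSigma a b t) c|
      = (1 / 2) * ((a + c) / √(a * c)) *
          |hatSigma (b / √(a * c)) - (b / √(a * c)) * hatSigma' (b / √(a * c))| +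
        hatSigma' (b / √(a * c)) := by
  set s := √(a * c)
  set D := hatSigma (b / s) - b / s * hatSigma' (b / s)
  have hs0 : 0 < s := sqrt_pos.2 (mul_pos ha hc)
  have hda : deriv (fun t => psiSigma t b c) a = c / (2 * s) * D := by
    rw [(HasDerivAt.psiSigma (hasDerivAt_id' a) (hasDerivAt_const a b) (hasDerivAt_const a c)
      ha hc hb).deriv]
    ring
  have hdb : deriv (fun t => psiSigma a t c) b = hatSigma' (b / s) := by
    rw [(HasDerivAt.psiSigma (hasDerivAt_const b a) (hasDerivAt_id' b) (hasDerivAt_const b c)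
      ha hc hb).deriv]
    ring
  have hdc : deriv (fun t => psiSigma a b t) c = a / (2 * s) * D := by
    rw [(HasDerivAt.psiSigma (hasDerivAt_const c a) (hasDerivAt_const c b) (hasDerivAt_id' c)
      ha hc hb).deriv]
    ring
  rw [hda, hdb, hdc, abs_mul, abs_mul, abs_of_pos (by positivity : 0 < c / (2 * s)),
    abs_of_pos (by positivity : 0 < a / (2 * s)), abs_of_nonneg (hatSigma'_nonneg _)]
  ring

lemma abs_directional_deriv_le {a c s D σ da db dc M : ℝ} (ha : 0 ≤ a) (hc : 0 ≤ c)
    (hs : 0 ≤ s) (hσ : 0 ≤ σ) (hda : |da| ≤ M) (hdb : |db| ≤ M) (hdc : |dc| ≤ M) :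
    |(da * c + a * dc) / (2 * s) * D + db * σ| ≤ M * ((a + c) / (2 * s) * |D| + σ) := by
  have hnum : |da * c + a * dc| ≤ M * c + a * M :=
    calc |da * c + a * dc| ≤ |da * c| + |a * dc| := abs_add_le _ _
      _ = |da| * c + a * |dc| := by rw [abs_mul, abs_mul, abs_of_nonneg ha, abs_of_nonneg hc]
      _ ≤ M * c + a * M := by gcongr
  calc |(da * c + a * dc) / (2 * s) * D + db * σ|
      ≤ |(da * c + a * dc) / (2 * s) * D| + |db * σ| := abs_add_le _ _
    _ = |da * c + a * dc| / (2 * s) * |D| + |db| * σ := by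
        rw [abs_mul, abs_div, abs_of_nonneg (by positivity : (0 : ℝ) ≤ 2 * s), abs_mul,
          abs_of_nonneg hσ]
    _ ≤ (M * c + a * M) / (2 * s) * |D| + M * σ := by gcongr
    _ = M * ((a + c) / (2 * s) * |D| + σ) := by ring

theorem abs_psiSigma_sub_le {μ r a b c a' b' c' : ℝ} (hμ : 0 < μ) (hr : r ≤ μ / 2)
    (ha : a ∈ Set.Icc (μ - r) (μ + r)) (hc : c ∈ Set.Icc (μ - r) (μ + r))
    (ha' : a' ∈ Set.Icc (μ - r) (μ + r)) (hc' : c' ∈ Set.Icc (μ - r) (μ + r))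
    (hb : b ^ 2 < a * c) (hb' : b' ^ 2 < a' * c') :
    |psiSigma a b c - psiSigma a' b' c'|
      ≤ (1 + (1 / π) * (r / μ) ^ 2) * max (max |a - a'| |b - b'|) |c - c'| := by
  set M := max (max |a - a'| |b - b'|) |c - c'|
  have hMa : |a' - a| ≤ M := abs_sub_comm a a' ▸ (le_max_left _ _).trans (le_max_left _ _)
  have hMb : |b' - b| ≤ M := abs_sub_comm b b' ▸ (le_max_right _ _).trans (le_max_left _ _)
  have hMc : |c' - c| ≤ M := abs_sub_comm c c' ▸ le_max_right _ _
  have hline : ∀ x y t : ℝ, HasDerivAt (fun u => x + u * (y - x)) (y - x) t := fun x y t => by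
    simpa using ((hasDerivAt_id' t).mul_const (y - x)).const_add x
  have hIcc : ∀ {x y t : ℝ}, x ∈ Set.Icc (μ - r) (μ + r) → y ∈ Set.Icc (μ - r) (μ + r) →
      t ∈ Set.Icc (0 : ℝ) 1 → x + t * (y - x) ∈ Set.Icc (μ - r) (μ + r) := fun hx hy ht =>
    (convex_Icc (μ - r) (μ + r)).add_smul_sub_mem hx hy ht
  have hμr : 0 < μ - r := by linarith
  have hM : 0 ≤ M := (abs_nonneg _).trans hMc
  set g := fun u => psiSigma (a + u * (a' - a)) (b + u * (b' - b)) (c + u * (c' - c))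
  have hderiv : ∀ t ∈ Set.Icc (0 : ℝ) 1, HasDerivAt g (deriv g t) t ∧
      |deriv g t| ≤ M * (1 + (1 / π) * (r / μ) ^ 2) := by
    intro t ht
    have hAt := hIcc ha ha' ht
    have hCt := hIcc hc hc' ht
    have hA0 := hμr.trans_le hAt.1
    have hC0 := hμr.trans_le hCt.1
    have hg := HasDerivAt.psiSigma (hline a a' t) (hline b b' t) (hline c c' t) hA0 hC0
      (sq_lt_mul_of_segment (hμr.trans_le ha.1) (hμr.trans_le hc'.1) hb hb' ht)
    refine ⟨hg.differentiableAt.hasDerivAt, ?_⟩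
    rw [hg.deriv]
    exact (abs_directional_deriv_le hA0.le hC0.le (sqrt_nonneg _) (hatSigma'_nonneg _)
      hMa hMb hMc).trans (mul_le_mul_of_nonneg_left
        (mul_abs_hatSigma_sub_add_le (add_div_two_sqrt_mul_le hμ hr hAt hCt)) hM)
  have hmvt := norm_image_sub_le_of_norm_deriv_le_segment_01'
    (fun t ht => (hderiv t ht).1.hasDerivWithinAt)
    (fun t ht => (hderiv t (Set.Ico_subset_Icc_self ht)).2)
  rw [abs_sub_comm, mul_comm _ M]
  simpa only [g, one_mul, zero_mul, add_zero, add_sub_cancel, norm_eq_abs] using hmvt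

/-- ℓ₁-norm of the gradient of ψ_σ at a positive definite matrix, and the
resulting local Lipschitz property of ψ_σ in the entrywise max norm on M_{μ,r}. -/
theorem psi_sigma_grad_and_lipschitz :
    (∀ a b c : ℝ, 0 < a → 0 < c → b ^ 2 < a * c →
      |deriv (fun t => psiSigma t b c) a| + |deriv (fun t => psiSigma a t c) b| +
          |deriv (fun t => psiSigma a b t) c|
        = (1 / 2) * ((a + c) / Real.sqrt (a * c)) *
            |hatSigma (b / Real.sqrt (a * c)) -
              (b / Real.sqrt (a * c)) * hatSigma' (b / Real.sqrt (a * c))| +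
          hatSigma' (b / Real.sqrt (a * c))) ∧
    (∀ μ r : ℝ, 0 < μ → 0 < r → r ≤ μ / 2 →
      ∀ a b c a' b' c' : ℝ,
        a ∈ Set.Icc (μ - r) (μ + r) → c ∈ Set.Icc (μ - r) (μ + r) →
        a' ∈ Set.Icc (μ - r) (μ + r) → c' ∈ Set.Icc (μ - r) (μ + r) →
        b ^ 2 < a * c → b' ^ 2 < a' * c' →
        |psiSigma a b c - psiSigma a' b' c'|
          ≤ (1 + (1 / π) * (r / μ) ^ 2) * max (max |a - a'| |b - b'|) |c - c'|) :=
  ⟨fun _ _ _ ha hc hb => abs_deriv_psiSigma_add_eq ha hc hb,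
    fun _ _ hμ _ hr _ _ _ _ _ _ ha hc ha' hc' hb hb' =>
      abs_psiSigma_sub_le hμ hr ha hc ha' hc' hb hb'⟩
end
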